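/- arXiv:math/0608343 — 3 statements merged into one kernel-verified Lean document; each statement's English description precedes it below -/
import Mathlib

section
/- Let X be a set, let φ : X → ℝ be a real-valued function, identified with the complex-valued function on finite configurations equal to φ(x) on singletons {x} and to 0 on every configuration of cardinality ≠ 1, and let G₁, G₂ : Finset X → ℂ. Then (φ ⋆ G₁) ⋆ (conj G₂) = G₁ ⋆ conj(φ ⋆ G₂), where conj G denotes the pointwise complex conjugate of G. (This is the Hermiticity of the convolution operator A_φ G := φ ⋆ G with respect to the bilinear form (G₁, G₂) ↦ ∫ (G₁ ⋆ conj G₂) dρ.) -/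
open Finset

/-- The ⋆-convolution of two functions on finite configurations. -/
noncomputable def starConv {X : Type*} [DecidableEq X] (G₁ G₂ : Finset X → ℂ)
    (η : Finset X) : ℂ :=
  ∑ p ∈ (η.powerset ×ˢ η.powerset ×ˢ η.powerset).filter
      (fun p => Disjoint p.1 p.2.1 ∧ Disjoint p.1 p.2.2 ∧ Disjoint p.2.1 p.2.2 ∧
        p.1 ∪ p.2.1 ∪ p.2.2 = η),
    G₁ (p.1 ∪ p.2.1) * G₂ (p.2.1 ∪ p.2.2)

/-- A function `φ : X → ℂ` identified with the function on finite configurations equal to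
`φ x` on singletons `{x}` and `0` on configurations of cardinality different from one. -/
noncomputable def liftFun {X : Type*} (φ : X → ℂ) : Finset X → ℂ :=
  fun η => if η.card = 1 then ∑ x ∈ η, φ x else 0

section Aux

variable {X : Type*} [DecidableEq X]

/-- The index set of the ⋆-convolution. -/
noncomputable abbrev tripSet (η : Finset X) : Finset (Finset X × Finset X × Finset X) :=
  (η.powerset ×ˢ η.powerset ×ˢ η.powerset).filter
      (fun p => Disjoint p.1 p.2.1 ∧ Disjoint p.1 p.2.2 ∧ Disjoint p.2.1 p.2.2 ∧
        p.1 ∪ p.2.1 ∪ p.2.2 = η)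

lemma starConv_def (G₁ G₂ : Finset X → ℂ) (η : Finset X) :
    starConv G₁ G₂ η = ∑ p ∈ tripSet η, G₁ (p.1 ∪ p.2.1) * G₂ (p.2.1 ∪ p.2.2) := rfl

lemma mem_tripSet {η : Finset X} {p : Finset X × Finset X × Finset X} :
    p ∈ tripSet η ↔ p.1 ⊆ η ∧ p.2.1 ⊆ η ∧ p.2.2 ⊆ η ∧
      Disjoint p.1 p.2.1 ∧ Disjoint p.1 p.2.2 ∧ Disjoint p.2.1 p.2.2 ∧
      p.1 ∪ p.2.1 ∪ p.2.2 = η := by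
  simp only [tripSet, Finset.mem_filter, Finset.mem_product, Finset.mem_powerset]
  tauto

/-- Commutativity of the ⋆-convolution. -/
lemma starConv_comm (G₁ G₂ : Finset X → ℂ) (η : Finset X) :
    starConv G₁ G₂ η = starConv G₂ G₁ η := by
  rw [starConv_def, starConv_def]
  refine Finset.sum_nbij' (fun p => (p.2.2, p.2.1, p.1)) (fun p => (p.2.2, p.2.1, p.1))
    ?_ ?_ ?_ ?_ ?_
  · intro p hp
    rw [mem_tripSet] at hp ⊢
    obtain ⟨h1, h2, h3, h4, h5, h6, h7⟩ := hp
    refine ⟨h3, h2, h1, h6.symm, h5.symm, h4.symm, ?_⟩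
    show p.2.2 ∪ p.2.1 ∪ p.1 = η
    rw [← h7]; ac_rfl
  · intro p hp
    rw [mem_tripSet] at hp ⊢
    obtain ⟨h1, h2, h3, h4, h5, h6, h7⟩ := hp
    refine ⟨h3, h2, h1, h6.symm, h5.symm, h4.symm, ?_⟩
    show p.2.2 ∪ p.2.1 ∪ p.1 = η
    rw [← h7]; ac_rfl
  · intro p _; rfl
  · intro p _; rfl
  · intro p _
    show G₁ (p.1 ∪ p.2.1) * G₂ (p.2.1 ∪ p.2.2) = G₂ (p.2.2 ∪ p.2.1) * G₁ (p.2.1 ∪ p.1)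
    rw [mul_comm, union_comm p.2.2 p.2.1, union_comm p.1 p.2.1]

lemma liftFun_singleton (φ : X → ℂ) (x : X) : liftFun φ {x} = φ x := by
  simp [liftFun]

/-- Expansion of convolution with a lifted function. -/
lemma starConv_lift (φ : X → ℂ) (G : Finset X → ℂ) (η : Finset X) :
    starConv (liftFun φ) G η = ∑ x ∈ η, φ x * (G (η.erase x) + G η) := by
  rw [starConv_def]
  rw [← Finset.sum_filter_of_ne (p := fun p : Finset X × Finset X × Finset X =>
      (p.1 ∪ p.2.1).card = 1) (fun p _ hne => by
    by_contra h
    exact hne (by simp [liftFun, h]))]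
  rw [← Finset.sum_filter_add_sum_filter_not _ (fun p : Finset X × Finset X × Finset X =>
      p.1 = ∅)]
  have himg1 : ((tripSet η).filter (fun p => (p.1 ∪ p.2.1).card = 1)).filter
      (fun p : Finset X × Finset X × Finset X => p.1 = ∅) =
      η.image (fun x => ((∅ : Finset X), {x}, η.erase x)) := by
    ext p
    constructor
    · intro hp
      rw [Finset.mem_filter] at hp
      obtain ⟨hp2, hemp⟩ := hp
      rw [Finset.mem_filter] at hp2
      obtain ⟨hpT, hcard⟩ := hp2
      rw [mem_tripSet] at hpT
      obtain ⟨h1, h2, h3, h4, h5, h6, h7⟩ := hpT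
      rw [hemp, empty_union] at hcard
      obtain ⟨x, hx⟩ := Finset.card_eq_one.mp hcard
      have hxη : x ∈ η := by
        rw [← h7, hemp, hx]; simp
      rw [Finset.mem_image]
      refine ⟨x, hxη, ?_⟩
      have hx22 : x ∉ p.2.2 := by
        intro hmem
        exact (Finset.disjoint_left.mp h6) (by simp [hx]) hmem
      have h22 : p.2.2 = η.erase x := by
        rw [← h7, hemp, hx, empty_union, ← Finset.insert_eq, Finset.erase_insert hx22]
      exact Prod.ext hemp.symm (Prod.ext hx.symm h22.symm)
    · intro hp
      rw [Finset.mem_image] at hp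
      obtain ⟨x, hx, rfl⟩ := hp
      rw [Finset.mem_filter, Finset.mem_filter, mem_tripSet]
      refine ⟨⟨⟨by simp, by simpa using hx, Finset.erase_subset _ _, by simp, by simp,
        by simp, ?_⟩, by simp⟩, rfl⟩
      show (∅ : Finset X) ∪ {x} ∪ η.erase x = η
      rw [empty_union, ← Finset.insert_eq, Finset.insert_erase hx]
  have himg2 : ((tripSet η).filter (fun p => (p.1 ∪ p.2.1).card = 1)).filter
      (fun p : Finset X × Finset X × Finset X => ¬ p.1 = ∅) =
      η.image (fun x => (({x} : Finset X), (∅ : Finset X), η.erase x)) := by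
    ext p
    constructor
    · intro hp
      rw [Finset.mem_filter] at hp
      obtain ⟨hp2, hemp⟩ := hp
      rw [Finset.mem_filter] at hp2
      obtain ⟨hpT, hcard⟩ := hp2
      rw [mem_tripSet] at hpT
      obtain ⟨h1, h2, h3, h4, h5, h6, h7⟩ := hpT
      have hsub : p.1 ⊆ p.1 ∪ p.2.1 := Finset.subset_union_left
      have hc1 : p.1.card = 1 := by
        have h1le : 1 ≤ p.1.card := Finset.card_pos.mpr (Finset.nonempty_of_ne_empty hemp)
        have := Finset.card_le_card hsub
        omega
      obtain ⟨x, hx⟩ := Finset.card_eq_one.mp hc1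
      have h21 : p.2.1 = ∅ := by
        have heq : p.1 = p.1 ∪ p.2.1 := Finset.eq_of_subset_of_card_le hsub (by omega)
        have h21sub : p.2.1 ⊆ p.1 := heq ▸ Finset.subset_union_right
        exact Finset.eq_empty_of_forall_notMem fun y hy =>
          absurd hy ((Finset.disjoint_left.mp h4) (h21sub hy))
      have hxη : x ∈ η := h1 (by simp [hx])
      have hx22 : x ∉ p.2.2 := fun hmem =>
        (Finset.disjoint_left.mp h5) (by simp [hx]) hmem
      have h22 : p.2.2 = η.erase x := by
        rw [← h7, hx, h21, union_empty, ← Finset.insert_eq, Finset.erase_insert hx22]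
      rw [Finset.mem_image]
      exact ⟨x, hxη, Prod.ext hx.symm (Prod.ext h21.symm h22.symm)⟩
    · intro hp
      rw [Finset.mem_image] at hp
      obtain ⟨x, hx, rfl⟩ := hp
      rw [Finset.mem_filter, Finset.mem_filter, mem_tripSet]
      refine ⟨⟨⟨by simpa using hx, by simp, Finset.erase_subset _ _, by simp, by
        simp, by simp, ?_⟩, by simp⟩, by simp⟩
      show ({x} : Finset X) ∪ ∅ ∪ η.erase x = η
      rw [union_empty, ← Finset.insert_eq, Finset.insert_erase hx]
  rw [himg1, himg2,
    Finset.sum_image (fun x _ y _ h =>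
      Finset.singleton_injective (congrArg (fun t => t.2.1) h)),
    Finset.sum_image (fun x _ y _ h =>
      Finset.singleton_injective (congrArg (fun t => t.1) h))]
  simp only [empty_union, union_empty, liftFun_singleton]
  have : ∀ x ∈ η, φ x * G ({x} ∪ η.erase x) = φ x * G η := by
    intro x hx
    rw [← Finset.insert_eq, Finset.insert_erase hx]
  rw [Finset.sum_congr rfl this, ← Finset.sum_add_distrib]
  exact Finset.sum_congr rfl fun x _ => by ring

/-- The canonical index set: a marked point together with a partition of the rest. -/
noncomputable abbrev quadSet (η : Finset X) : Finset (X × Finset X × Finset X × Finset X) :=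
  (η ×ˢ η.powerset ×ˢ η.powerset ×ˢ η.powerset).filter
    (fun q => Disjoint q.2.1 q.2.2.1 ∧ Disjoint q.2.1 q.2.2.2 ∧ Disjoint q.2.2.1 q.2.2.2 ∧
      q.2.1 ∪ q.2.2.1 ∪ q.2.2.2 = η.erase q.1)

lemma mem_quadSet {η : Finset X} {q : X × Finset X × Finset X × Finset X} :
    q ∈ quadSet η ↔ q.1 ∈ η ∧ q.2.1 ⊆ η ∧ q.2.2.1 ⊆ η ∧ q.2.2.2 ⊆ η ∧
      Disjoint q.2.1 q.2.2.1 ∧ Disjoint q.2.1 q.2.2.2 ∧ Disjoint q.2.2.1 q.2.2.2 ∧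
      q.2.1 ∪ q.2.2.1 ∪ q.2.2.2 = η.erase q.1 := by
  simp only [quadSet, Finset.mem_filter, Finset.mem_product, Finset.mem_powerset]
  tauto

lemma notMem_parts {η : Finset X} {q : X × Finset X × Finset X × Finset X}
    (hq : q ∈ quadSet η) : q.1 ∉ q.2.1 ∧ q.1 ∉ q.2.2.1 ∧ q.1 ∉ q.2.2.2 := by
  rw [mem_quadSet] at hq
  obtain ⟨-, -, -, -, -, -, -, h⟩ := hq
  have h1 : q.2.1 ⊆ η.erase q.1 := h ▸ (Finset.subset_union_left.trans Finset.subset_union_left)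
  have h2 : q.2.2.1 ⊆ η.erase q.1 := h ▸ (Finset.subset_union_right.trans Finset.subset_union_left)
  have h3 : q.2.2.2 ⊆ η.erase q.1 := h ▸ Finset.subset_union_right
  exact ⟨fun hm => Finset.notMem_erase _ _ (h1 hm),
    fun hm => Finset.notMem_erase _ _ (h2 hm),
    fun hm => Finset.notMem_erase _ _ (h3 hm)⟩

/-- The crux: the double convolution expands as a sum over the canonical index set. -/
lemma starConv_crux (φ : X → ℂ) (F H : Finset X → ℂ) (η : Finset X) :
    starConv (starConv (liftFun φ) F) H η =
      ∑ q ∈ quadSet η, φ q.1 *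
        ((F (q.2.1 ∪ q.2.2.1) + F (insert q.1 (q.2.1 ∪ q.2.2.1))) *
         (H (q.2.2.1 ∪ q.2.2.2) + H (insert q.1 (q.2.2.1 ∪ q.2.2.2)))) := by
  rw [starConv_def]
  have step1 : ∀ p ∈ tripSet η,
      starConv (liftFun φ) F (p.1 ∪ p.2.1) * H (p.2.1 ∪ p.2.2) =
      (∑ x ∈ p.1, φ x * (F ((p.1 ∪ p.2.1).erase x) + F (p.1 ∪ p.2.1)) * H (p.2.1 ∪ p.2.2)) +
      (∑ x ∈ p.2.1, φ x * (F ((p.1 ∪ p.2.1).erase x) + F (p.1 ∪ p.2.1)) * H (p.2.1 ∪ p.2.2)) := by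
    intro p hp
    rw [mem_tripSet] at hp
    rw [starConv_lift, Finset.sum_mul, ← Finset.sum_union hp.2.2.2.1]
  rw [Finset.sum_congr rfl step1, Finset.sum_add_distrib]
  have subA : (∑ p ∈ tripSet η, ∑ x ∈ p.1,
      φ x * (F ((p.1 ∪ p.2.1).erase x) + F (p.1 ∪ p.2.1)) * H (p.2.1 ∪ p.2.2)) =
      ∑ q ∈ quadSet η, φ q.1 *
        ((F (q.2.1 ∪ q.2.2.1) + F (insert q.1 (q.2.1 ∪ q.2.2.1))) *
         (H (q.2.2.1 ∪ q.2.2.2))) := by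
    rw [Finset.sum_sigma']
    refine Finset.sum_nbij' (fun r => (r.2, r.1.1.erase r.2, r.1.2.1, r.1.2.2))
      (fun q => ⟨(insert q.1 q.2.1, q.2.2.1, q.2.2.2), q.1⟩) ?_ ?_ ?_ ?_ ?_
    · rintro ⟨p, x⟩ hr
      rw [Finset.mem_sigma, mem_tripSet] at hr
      obtain ⟨⟨h1, h2, h3, h4, h5, h6, h7⟩, hx⟩ := hr
      rw [mem_quadSet]
      refine ⟨h1 hx, (Finset.erase_subset _ _).trans h1, h2, h3,
        Finset.disjoint_of_subset_left (Finset.erase_subset _ _) h4,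
        Finset.disjoint_of_subset_left (Finset.erase_subset _ _) h5, h6, ?_⟩
      simp only
      rw [← h7, Finset.erase_union_distrib, Finset.erase_union_distrib,
        Finset.erase_eq_of_notMem (Finset.disjoint_left.mp h4 hx),
        Finset.erase_eq_of_notMem (Finset.disjoint_left.mp h5 hx)]
    · intro q hq
      rw [mem_quadSet] at hq
      obtain ⟨h0, h1, h2, h3, h4, h5, h6, h7⟩ := hq
      obtain ⟨n1, n2, n3⟩ := notMem_parts (mem_quadSet.mpr ⟨h0, h1, h2, h3, h4, h5, h6, h7⟩)
      rw [Finset.mem_sigma, mem_tripSet]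
      refine ⟨⟨Finset.insert_subset h0 h1, h2, h3,
        Finset.disjoint_insert_left.mpr ⟨n2, h4⟩,
        Finset.disjoint_insert_left.mpr ⟨n3, h5⟩, h6, ?_⟩, Finset.mem_insert_self _ _⟩
      simp only
      rw [Finset.insert_union, Finset.insert_union, h7, Finset.insert_erase h0]
    · rintro ⟨p, x⟩ hr
      rw [Finset.mem_sigma] at hr
      simp only
      congr 1
      · exact Prod.ext (Finset.insert_erase hr.2) rfl
    · intro q hq
      obtain ⟨n1, -, -⟩ := notMem_parts hq
      simp only
      rw [Finset.erase_insert n1]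
    · rintro ⟨p, x⟩ hr
      rw [Finset.mem_sigma, mem_tripSet] at hr
      obtain ⟨⟨h1, h2, h3, h4, h5, h6, h7⟩, hx⟩ := hr
      simp only
      have e1 : (p.1 ∪ p.2.1).erase x = p.1.erase x ∪ p.2.1 := by
        rw [Finset.erase_union_distrib,
          Finset.erase_eq_of_notMem (Finset.disjoint_left.mp h4 hx)]
      have e2 : insert x (p.1.erase x ∪ p.2.1) = p.1 ∪ p.2.1 := by
        rw [← Finset.insert_union, Finset.insert_erase hx]
      rw [e1, e2]; ring
  have subB : (∑ p ∈ tripSet η, ∑ x ∈ p.2.1,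
      φ x * (F ((p.1 ∪ p.2.1).erase x) + F (p.1 ∪ p.2.1)) * H (p.2.1 ∪ p.2.2)) =
      ∑ q ∈ quadSet η, φ q.1 *
        ((F (q.2.1 ∪ q.2.2.1) + F (insert q.1 (q.2.1 ∪ q.2.2.1))) *
         (H (insert q.1 (q.2.2.1 ∪ q.2.2.2)))) := by
    rw [Finset.sum_sigma']
    refine Finset.sum_nbij' (fun r => (r.2, r.1.1, r.1.2.1.erase r.2, r.1.2.2))
      (fun q => ⟨(q.2.1, insert q.1 q.2.2.1, q.2.2.2), q.1⟩) ?_ ?_ ?_ ?_ ?_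
    · rintro ⟨p, x⟩ hr
      rw [Finset.mem_sigma, mem_tripSet] at hr
      obtain ⟨⟨h1, h2, h3, h4, h5, h6, h7⟩, hx⟩ := hr
      rw [mem_quadSet]
      refine ⟨h2 hx, h1, (Finset.erase_subset _ _).trans h2, h3,
        Finset.disjoint_of_subset_right (Finset.erase_subset _ _) h4, h5,
        Finset.disjoint_of_subset_left (Finset.erase_subset _ _) h6, ?_⟩
      simp only
      rw [← h7, Finset.erase_union_distrib, Finset.erase_union_distrib,
        Finset.erase_eq_of_notMem (Finset.disjoint_right.mp h4 hx),
        Finset.erase_eq_of_notMem (Finset.disjoint_left.mp h6 hx)]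
    · intro q hq
      rw [mem_quadSet] at hq
      obtain ⟨h0, h1, h2, h3, h4, h5, h6, h7⟩ := hq
      obtain ⟨n1, n2, n3⟩ := notMem_parts (mem_quadSet.mpr ⟨h0, h1, h2, h3, h4, h5, h6, h7⟩)
      rw [Finset.mem_sigma, mem_tripSet]
      refine ⟨⟨h1, Finset.insert_subset h0 h2, h3,
        Finset.disjoint_insert_right.mpr ⟨n1, h4⟩, h5,
        Finset.disjoint_insert_left.mpr ⟨n3, h6⟩, ?_⟩, Finset.mem_insert_self _ _⟩
      simp only
      rw [Finset.union_insert, Finset.insert_union, h7, Finset.insert_erase h0]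
    · rintro ⟨p, x⟩ hr
      rw [Finset.mem_sigma] at hr
      simp only
      congr 1
      · exact Prod.ext rfl (Prod.ext (Finset.insert_erase hr.2) rfl)
    · intro q hq
      obtain ⟨-, n2, -⟩ := notMem_parts hq
      simp only
      rw [Finset.erase_insert n2]
    · rintro ⟨p, x⟩ hr
      rw [Finset.mem_sigma, mem_tripSet] at hr
      obtain ⟨⟨h1, h2, h3, h4, h5, h6, h7⟩, hx⟩ := hr
      simp only
      have e1 : (p.1 ∪ p.2.1).erase x = p.1 ∪ p.2.1.erase x := by
        rw [Finset.erase_union_distrib,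
          Finset.erase_eq_of_notMem (Finset.disjoint_right.mp h4 hx)]
      have e2 : insert x (p.1 ∪ p.2.1.erase x) = p.1 ∪ p.2.1 := by
        rw [← Finset.union_insert, Finset.insert_erase hx]
      have e3 : (p.2.1.erase x) ∪ p.2.2 = (p.2.1 ∪ p.2.2).erase x := by
        rw [Finset.erase_union_distrib,
          Finset.erase_eq_of_notMem (Finset.disjoint_left.mp h6 hx)]
      have e4 : insert x (p.2.1.erase x ∪ p.2.2) = p.2.1 ∪ p.2.2 := by
        rw [← Finset.insert_union, Finset.insert_erase hx]
      rw [e1, e2, e4]; ring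
  rw [subA, subB, ← Finset.sum_add_distrib]
  exact Finset.sum_congr rfl fun q _ => by ring

/-- Symmetry of the canonical sum. -/
lemma quad_symm (φ : X → ℂ) (F H : Finset X → ℂ) (η : Finset X) :
    (∑ q ∈ quadSet η, φ q.1 *
        ((F (q.2.1 ∪ q.2.2.1) + F (insert q.1 (q.2.1 ∪ q.2.2.1))) *
         (H (q.2.2.1 ∪ q.2.2.2) + H (insert q.1 (q.2.2.1 ∪ q.2.2.2))))) =
      ∑ q ∈ quadSet η, φ q.1 *
        ((H (q.2.1 ∪ q.2.2.1) + H (insert q.1 (q.2.1 ∪ q.2.2.1))) *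
         (F (q.2.2.1 ∪ q.2.2.2) + F (insert q.1 (q.2.2.1 ∪ q.2.2.2)))) := by
  refine Finset.sum_nbij' (fun q => (q.1, q.2.2.2, q.2.2.1, q.2.1))
    (fun q => (q.1, q.2.2.2, q.2.2.1, q.2.1)) ?_ ?_ ?_ ?_ ?_
  · intro q hq
    rw [mem_quadSet] at hq ⊢
    obtain ⟨h0, h1, h2, h3, h4, h5, h6, h7⟩ := hq
    refine ⟨h0, h3, h2, h1, h6.symm, h5.symm, h4.symm, ?_⟩
    simp only
    rw [← h7]; ac_rfl
  · intro q hq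
    rw [mem_quadSet] at hq ⊢
    obtain ⟨h0, h1, h2, h3, h4, h5, h6, h7⟩ := hq
    refine ⟨h0, h3, h2, h1, h6.symm, h5.symm, h4.symm, ?_⟩
    simp only
    rw [← h7]; ac_rfl
  · intro q _; rfl
  · intro q _; rfl
  · intro q _
    simp only
    rw [union_comm q.2.2.2 q.2.2.1, union_comm q.2.1 q.2.2.1]
    ring

/-- Self-adjointness of `A_φ`. -/
lemma starConv_selfadj (φ : X → ℂ) (F H : Finset X → ℂ) (η : Finset X) :
    starConv (starConv (liftFun φ) F) H η = starConv (starConv (liftFun φ) H) F η := by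
  rw [starConv_crux, starConv_crux, quad_symm]

lemma liftFun_conj (φ : X → ℝ) (ξ : Finset X) :
    starRingEnd ℂ (liftFun (fun x => (φ x : ℂ)) ξ) = liftFun (fun x => (φ x : ℂ)) ξ := by
  simp only [liftFun]
  split <;> simp [map_sum]

lemma starConv_lift_conj (φ : X → ℝ) (G : Finset X → ℂ) (η : Finset X) :
    starRingEnd ℂ (starConv (liftFun (fun x => (φ x : ℂ))) G η) =
      starConv (liftFun (fun x => (φ x : ℂ))) (fun ξ => starRingEnd ℂ (G ξ)) η := by
  rw [starConv_def, starConv_def, map_sum]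
  exact Finset.sum_congr rfl fun p _ => by rw [map_mul, liftFun_conj]

end Aux

/-- Hermiticity of the convolution operator `A_φ G := φ ⋆ G` for a real-valued `φ`:
`(φ ⋆ G₁) ⋆ conj G₂ = G₁ ⋆ conj (φ ⋆ G₂)`. -/
theorem starConv_hermitian {X : Type*} [DecidableEq X] (φ : X → ℝ)
    (G₁ G₂ : Finset X → ℂ) :
    starConv (starConv (liftFun fun x => (φ x : ℂ)) G₁)
        (fun η => starRingEnd ℂ (G₂ η)) =
      starConv G₁
        (fun η => starRingEnd ℂ (starConv (liftFun fun x => (φ x : ℂ)) G₂ η)) := by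
  funext η
  have h1 : (fun ξ => starRingEnd ℂ (starConv (liftFun fun x => (φ x : ℂ)) G₂ ξ)) =
      starConv (liftFun fun x => (φ x : ℂ)) (fun ξ => starRingEnd ℂ (G₂ ξ)) := by
    funext ξ; exact starConv_lift_conj φ G₂ ξ
  rw [h1]
  exact (starConv_selfadj _ _ _ η).trans (starConv_comm _ _ η)
end

section
/- Let X be a set and G₁, G₂ : Finset X → ℂ. Then for every finite configuration γ (a Finset X), the K-transform turns ⋆-convolution into pointwise multiplication: K(G₁ ⋆ G₂)(γ) = (KG₁)(γ) · (KG₂)(γ). -/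
open Finset

/-- The `K`-transform: `(KG)(γ) = Σ_{η ⊆ γ} G(η)`. -/
noncomputable def Ktransform {X : Type*} [DecidableEq X] (G : Finset X → ℂ)
    (γ : Finset X) : ℂ :=
  ∑ η ∈ γ.powerset, G η

theorem Ktransform_starConv {X : Type*} [DecidableEq X]
    (G₁ G₂ : Finset X → ℂ) (γ : Finset X) :
    Ktransform (starConv G₁ G₂) γ = Ktransform G₁ γ * Ktransform G₂ γ := by
  classical
  unfold Ktransform starConv
  -- Step A: for each η ⊆ γ, re-index the inner sum over γ.powerset³
  have hA : ∀ η ∈ γ.powerset,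
      (∑ p ∈ (η.powerset ×ˢ η.powerset ×ˢ η.powerset).filter
        (fun p => Disjoint p.1 p.2.1 ∧ Disjoint p.1 p.2.2 ∧ Disjoint p.2.1 p.2.2 ∧
          p.1 ∪ p.2.1 ∪ p.2.2 = η),
        G₁ (p.1 ∪ p.2.1) * G₂ (p.2.1 ∪ p.2.2)) =
      ∑ p ∈ ((γ.powerset ×ˢ γ.powerset ×ˢ γ.powerset).filter
        (fun p => Disjoint p.1 p.2.1 ∧ Disjoint p.1 p.2.2 ∧ Disjoint p.2.1 p.2.2)).filter
        (fun p => p.1 ∪ p.2.1 ∪ p.2.2 = η),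
        G₁ (p.1 ∪ p.2.1) * G₂ (p.2.1 ∪ p.2.2) := by
    intro η hη
    rw [mem_powerset] at hη
    apply Finset.sum_congr
    · ext p
      simp only [mem_filter, mem_product, mem_powerset, and_assoc]
      constructor
      · rintro ⟨h1, h2, h3, d1, d2, d3, hu⟩
        exact ⟨h1.trans hη, h2.trans hη, h3.trans hη, d1, d2, d3, hu⟩
      · rintro ⟨_, _, _, d1, d2, d3, hu⟩
        refine ⟨?_, ?_, ?_, d1, d2, d3, hu⟩
        · exact hu ▸ (subset_union_left.trans subset_union_left)
        · exact hu ▸ (subset_union_right.trans subset_union_left)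
        · exact hu ▸ subset_union_right
    · intros; rfl
  rw [Finset.sum_congr rfl hA]
  -- Step B: collapse the double sum
  have hB := Finset.sum_fiberwise_of_maps_to
    (g := fun p : Finset X × Finset X × Finset X => p.1 ∪ p.2.1 ∪ p.2.2)
    (s := (γ.powerset ×ˢ γ.powerset ×ˢ γ.powerset).filter
      (fun p => Disjoint p.1 p.2.1 ∧ Disjoint p.1 p.2.2 ∧ Disjoint p.2.1 p.2.2))
    (t := γ.powerset)
    (fun p hp => by
      simp only [mem_filter, mem_product, mem_powerset] at hp
      exact mem_powerset.2 (union_subset (union_subset hp.1.1 hp.1.2.1) hp.1.2.2))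
    (fun p => G₁ (p.1 ∪ p.2.1) * G₂ (p.2.1 ∪ p.2.2))
  rw [hB]
  -- Step C: RHS as sum over product
  rw [Finset.sum_mul_sum, ← Finset.sum_product']
  -- Step D: bijection
  refine Finset.sum_bij' (i := fun p _ => (p.1 ∪ p.2.1, p.2.1 ∪ p.2.2))
    (j := fun q _ => (q.1 \ q.2, q.1 ∩ q.2, q.2 \ q.1)) ?_ ?_ ?_ ?_ ?_
  · intro p hp
    simp only [mem_filter, mem_product, mem_powerset] at hp ⊢
    exact ⟨union_subset hp.1.1 hp.1.2.1, union_subset hp.1.2.1 hp.1.2.2⟩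
  · intro q hq
    simp only [mem_product, mem_powerset] at hq
    simp only [mem_filter, mem_product, mem_powerset]
    refine ⟨⟨(sdiff_subset.trans hq.1), (inter_subset_left.trans hq.1),
      (sdiff_subset.trans hq.2)⟩, ?_, ?_, ?_⟩
    · rw [Finset.disjoint_left]; intro a ha hb
      simp only [mem_sdiff, mem_inter] at ha hb
      exact ha.2 hb.2
    · rw [Finset.disjoint_left]; intro a ha hb
      simp only [mem_sdiff] at ha hb
      exact hb.2 ha.1
    · rw [Finset.disjoint_left]; intro a ha hb
      simp only [mem_sdiff, mem_inter] at ha hb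
      exact hb.2 ha.1
  · intro p hp
    simp only [mem_filter, mem_product, mem_powerset] at hp
    obtain ⟨_, d1, d2, d3⟩ := hp
    rw [Finset.disjoint_left] at d1 d2 d3
    ext1
    · ext a
      simp only [mem_sdiff, mem_union]
      constructor
      · rintro ⟨h | h, hn⟩
        · exact h
        · exact absurd (Or.inl h) hn
      · intro h
        exact ⟨Or.inl h, fun hc => hc.elim (fun h2 => d1 h h2) (fun h3 => d2 h h3)⟩
    · ext1
      · ext a
        simp only [mem_inter, mem_union]
        constructor
        · rintro ⟨h1 | h2, h2' | h3⟩
          · exact absurd h2' (d1 h1)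
          · exact absurd h3 (d2 h1)
          · exact h2'
          · exact h2
        · intro h; exact ⟨Or.inr h, Or.inl h⟩
      · ext a
        simp only [mem_sdiff, mem_union]
        constructor
        · rintro ⟨h2 | h3, hn⟩
          · exact absurd (Or.inr h2) hn
          · exact h3
        · intro h
          exact ⟨Or.inr h, fun hc => hc.elim (fun h1 => d2 h1 h) (fun h2 => d3 h2 h)⟩
  · intro q hq
    ext1
    · ext a
      simp only [mem_union, mem_sdiff, mem_inter]
      by_cases h : a ∈ q.2 <;> simp [h]
    · ext a
      simp only [mem_union, mem_sdiff, mem_inter]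
      by_cases h : a ∈ q.1 <;> simp [h]
  · intro p hp
    rfl
end

section
/- Let X be a set and φ : X → ℂ. For f : X → ℂ define the coherent state e(f, ·) : Finset X → ℂ by e(f, η) = ∏_{x ∈ η} f(x). Then e(e^φ − 1, ·) ⋆ e(e^{conj φ} − 1, ·) = e(e^{φ + conj φ} − 1, ·), i.e., for every finite configuration η one has (e(fun x => exp(φ x) − 1, ·) ⋆ e(fun x => exp(conj (φ x)) − 1, ·))(η) = ∏_{x ∈ η} (exp(φ(x) + conj(φ(x))) − 1). -/
open Finset Complex

/-- The coherent state `e(f, η) = Π_{x ∈ η} f(x)`. -/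
noncomputable def coherent {X : Type*} (f : X → ℂ) (η : Finset X) : ℂ :=
  ∏ x ∈ η, f x

lemma key_triple_sum {X : Type*} [DecidableEq X] (f g h : X → ℂ) (η : Finset X) :
    ∑ p ∈ (η.powerset ×ˢ η.powerset ×ˢ η.powerset).filter
      (fun p => Disjoint p.1 p.2.1 ∧ Disjoint p.1 p.2.2 ∧ Disjoint p.2.1 p.2.2 ∧
        p.1 ∪ p.2.1 ∪ p.2.2 = η),
      (∏ x ∈ p.1, f x) * (∏ x ∈ p.2.1, g x) * (∏ x ∈ p.2.2, h x)
    = ∏ x ∈ η, (f x + (g x + h x)) := by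
  rw [Finset.prod_add]
  simp_rw [Finset.prod_add, Finset.mul_sum]
  rw [Finset.sum_sigma']
  refine Finset.sum_nbij' (i := fun p => ⟨p.1, p.2.1⟩)
    (j := fun q => (q.1, q.2, (η \ q.1) \ q.2)) ?_ ?_ ?_ ?_ ?_
  · rintro ⟨t, u, v⟩ hp
    simp only [Finset.mem_filter, Finset.mem_product, Finset.mem_powerset] at hp
    obtain ⟨⟨ht, hu, hv⟩, d12, d13, d23, huni⟩ := hp
    simp only [Finset.mem_sigma, Finset.mem_powerset]
    exact ⟨ht, Finset.subset_sdiff.2 ⟨hu, d12.symm⟩⟩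
  · rintro ⟨t, u⟩ hq
    simp only [Finset.mem_sigma, Finset.mem_powerset] at hq
    obtain ⟨ht, hu⟩ := hq
    have hu' : u ⊆ η := hu.trans (Finset.sdiff_subset)
    have hdu : Disjoint t u := Finset.disjoint_of_subset_right hu Finset.sdiff_disjoint.symm
    simp only [Finset.mem_filter, Finset.mem_product, Finset.mem_powerset]
    refine ⟨⟨ht, hu', Finset.sdiff_subset.trans Finset.sdiff_subset⟩, hdu, ?_, ?_, ?_⟩
    · exact Finset.disjoint_of_subset_right Finset.sdiff_subset Finset.sdiff_disjoint.symm
    · exact Finset.sdiff_disjoint.symm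
    · rw [Finset.union_assoc, Finset.union_sdiff_of_subset hu,
        Finset.union_sdiff_of_subset ht]
  · rintro ⟨t, u, v⟩ hp
    simp only [Finset.mem_filter, Finset.mem_product, Finset.mem_powerset] at hp
    obtain ⟨⟨ht, hu, hv⟩, d12, d13, d23, huni⟩ := hp
    have : (η \ t) \ u = v := by
      subst huni
      ext x
      simp only [Finset.mem_sdiff, Finset.mem_union]
      have h1 := Finset.disjoint_left.1 d12
      have h2 := Finset.disjoint_left.1 d13
      have h3 := Finset.disjoint_left.1 d23
      tauto
    simp [this]
  · rintro ⟨t, u⟩ hq; rfl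
  · rintro ⟨t, u, v⟩ hp
    simp only [Finset.mem_filter, Finset.mem_product, Finset.mem_powerset] at hp
    obtain ⟨⟨ht, hu, hv⟩, d12, d13, d23, huni⟩ := hp
    have hv' : (η \ t) \ u = v := by
      subst huni
      ext x
      simp only [Finset.mem_sdiff, Finset.mem_union]
      have h2 := Finset.disjoint_left.1 d13
      have h3 := Finset.disjoint_left.1 d23
      tauto
    simp only [hv']
    ring

theorem starConv_coherent_exp {X : Type*} [DecidableEq X] (φ : X → ℂ)
    (η : Finset X) :
    starConv (coherent fun x => Complex.exp (φ x) - 1)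
        (coherent fun x => Complex.exp (starRingEnd ℂ (φ x)) - 1) η =
      ∏ x ∈ η, (Complex.exp (φ x + starRingEnd ℂ (φ x)) - 1) := by
  unfold starConv coherent
  have step : ∑ p ∈ (η.powerset ×ˢ η.powerset ×ˢ η.powerset).filter
      (fun p => Disjoint p.1 p.2.1 ∧ Disjoint p.1 p.2.2 ∧ Disjoint p.2.1 p.2.2 ∧
        p.1 ∪ p.2.1 ∪ p.2.2 = η),
      (∏ x ∈ p.1 ∪ p.2.1, (Complex.exp (φ x) - 1)) *
        ∏ x ∈ p.2.1 ∪ p.2.2, (Complex.exp (starRingEnd ℂ (φ x)) - 1)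
    = ∑ p ∈ (η.powerset ×ˢ η.powerset ×ˢ η.powerset).filter
      (fun p => Disjoint p.1 p.2.1 ∧ Disjoint p.1 p.2.2 ∧ Disjoint p.2.1 p.2.2 ∧
        p.1 ∪ p.2.1 ∪ p.2.2 = η),
      (∏ x ∈ p.1, (Complex.exp (φ x) - 1)) *
        (∏ x ∈ p.2.1, (Complex.exp (φ x) - 1) * (Complex.exp (starRingEnd ℂ (φ x)) - 1)) *
        ∏ x ∈ p.2.2, (Complex.exp (starRingEnd ℂ (φ x)) - 1) := by
    apply Finset.sum_congr rfl
    rintro ⟨t, u, v⟩ hp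
    simp only [Finset.mem_filter, Finset.mem_product, Finset.mem_powerset] at hp
    obtain ⟨⟨ht, hu, hv⟩, d12, d13, d23, huni⟩ := hp
    rw [Finset.prod_union d12, Finset.prod_union d23, Finset.prod_mul_distrib]
    ring
  rw [step, key_triple_sum]
  apply Finset.prod_congr rfl
  intro x _
  rw [Complex.exp_add]
  ring
end
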